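/- arXiv:2003.01503 — 8 statements merged into one kernel-verified Lean document; each statement's English description precedes it below -/
import Mathlib

section
/- If a decomposition of a chemical reaction network is independent, then any coarsening of the decomposition is independent. -/
open scoped Classical

noncomputable section

/-- A reaction: an ordered pair (reactant complex, product complex) of vectors in ℝ^S. -/
abbrev Rxn (S : Type*) := (S → ℝ) × (S → ℝ)

variable {S : Type*} [Fintype S]

/-- The set of complexes occurring in a reaction set. -/
def complexesOf (R : Finset (Rxn S)) : Finset (S → ℝ) :=
  R.image Prod.fst ∪ R.image Prod.snd

/-- `(C, R)` is a chemical reaction network on the species set `S`: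
complexes have nonnegative integer coordinates, reactions go between complexes,
no reaction is a loop, and every complex occurs in at least one reaction. -/
def IsCRN (C : Finset (S → ℝ)) (R : Finset (Rxn S)) : Prop :=
  C.Nonempty ∧ R.Nonempty ∧
  (∀ y ∈ C, ∀ s, ∃ n : ℕ, y s = (n : ℝ)) ∧
  (∀ r ∈ R, r.1 ∈ C ∧ r.2 ∈ C) ∧
  (∀ r ∈ R, r.1 ≠ r.2) ∧
  (∀ y ∈ C, ∃ r ∈ R, r.1 = y ∨ r.2 = y)

/-- The stoichiometric subspace `span {y' - y : (y, y') ∈ R}`. -/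
def stoichSubspace (R : Finset (Rxn S)) : Submodule ℝ (S → ℝ) :=
  Submodule.span ℝ ((fun r : Rxn S => r.2 - r.1) '' ↑R)

/-- The rank `s = dim S` of the network. -/
def crnRank (R : Finset (Rxn S)) : ℕ := Module.finrank ℝ (stoichSubspace R)

/-- The standard basis vector `ω_y` of the complex space `ℝ^C` (realized inside
the space of real-valued functions on complexes). -/
def omegaC (y : S → ℝ) : (S → ℝ) → ℝ := fun z => if z = y then 1 else 0

/-- The image of the incidence map `I_a`, i.e. the span of the vectors
`ω_{y'} - ω_y` over reactions `y → y'`. -/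
def incImage (R : Finset (Rxn S)) : Submodule ℝ ((S → ℝ) → ℝ) :=
  Submodule.span ℝ ((fun r : Rxn S => omegaC r.2 - omegaC r.1) '' ↑R)

/-- The underlying undirected graph of `(C, R)`, on the complexes occurring in `R`. -/
def linkGraph (R : Finset (Rxn S)) : SimpleGraph {y : S → ℝ // y ∈ complexesOf R} where
  Adj a b := a ≠ b ∧ ((a.1, b.1) ∈ R ∨ (b.1, a.1) ∈ R)
  symm := ⟨fun a b h => ⟨h.1.symm, h.2.symm⟩⟩
  loopless := ⟨fun a h => h.1 rfl⟩

/-- `n`, the number of complexes. -/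
def numComplexes (R : Finset (Rxn S)) : ℕ := (complexesOf R).card

/-- `l`, the number of linkage classes (connected components of the
underlying undirected graph). -/
def numLinkageClasses (R : Finset (Rxn S)) : ℕ :=
  Nat.card (linkGraph R).ConnectedComponent

/-- The deficiency `δ = n - l - s` (as an integer). -/
def deficiency (R : Finset (Rxn S)) : ℤ :=
  (numComplexes R : ℤ) - (numLinkageClasses R : ℤ) - (crnRank R : ℤ)

/-- A covering of the reaction set `R`: a family of subsets of `R` whose union is `R`. -/
def IsCovering {ι : Type*} (R : Finset (Rxn S)) (f : ι → Finset (Rxn S)) : Prop :=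
  (∀ i, f i ⊆ R) ∧ ∀ r ∈ R, ∃ i, r ∈ f i

/-- A decomposition of the reaction set `R`: a partition of `R` into nonempty subsets. -/
def IsDecomposition {ι : Type*} (R : Finset (Rxn S)) (f : ι → Finset (Rxn S)) : Prop :=
  (∀ i, (f i).Nonempty) ∧ (Pairwise fun i j => Disjoint (f i) (f j)) ∧
  (∀ i, f i ⊆ R) ∧ (∀ r ∈ R, ∃ i, r ∈ f i)

/-- Independence: the stoichiometric subspace is the direct sum of those of the subnetworks. -/
def IsIndependent {ι : Type*} (R : Finset (Rxn S)) (f : ι → Finset (Rxn S)) : Prop :=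
  (⨆ i, stoichSubspace (f i)) = stoichSubspace R ∧
  iSupIndep fun i => stoichSubspace (f i)

/-- Incidence independence: the image of the incidence map is the direct sum of the
images of the incidence maps of the subnetworks. -/
def IsIncidenceIndependent {ι : Type*} (R : Finset (Rxn S)) (f : ι → Finset (Rxn S)) : Prop :=
  (⨆ i, incImage (f i)) = incImage R ∧
  iSupIndep fun i => incImage (f i)

/-- A `𝒞`-decomposition: the complex sets of the subnetworks are pairwise disjoint. -/
def CDisjoint {ι : Type*} (f : ι → Finset (Rxn S)) : Prop :=
  Pairwise fun i j => Disjoint (complexesOf (f i)) (complexesOf (f j))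

/-- The set of nonzero complexes of a reaction set. -/
def nonzeroComplexesOf (R : Finset (Rxn S)) : Finset (S → ℝ) := (complexesOf R).erase 0

/-- A `𝒞*`-decomposition: the sets of nonzero complexes are pairwise disjoint. -/
def CstarDisjoint {ι : Type*} (f : ι → Finset (Rxn S)) : Prop :=
  Pairwise fun i j => Disjoint (nonzeroComplexesOf (f i)) (nonzeroComplexesOf (f j))

/-- A coarsening: each block of `f` is contained in exactly one block of `g`. -/
def IsCoarsening {ι κ : Type*} (f : ι → Finset (Rxn S)) (g : κ → Finset (Rxn S)) : Prop :=
  ∀ i, ∃! j, f i ⊆ g j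

/-- Undirected reachability in the graph `(C, R)`. -/
def undirReach (R : Finset (Rxn S)) : (S → ℝ) → (S → ℝ) → Prop :=
  Relation.ReflTransGen fun y z => (y, z) ∈ R ∨ (z, y) ∈ R

/-- Directed reachability in the digraph `(C, R)`. -/
def dirReach (R : Finset (Rxn S)) : (S → ℝ) → (S → ℝ) → Prop :=
  Relation.ReflTransGen fun y z => (y, z) ∈ R

/-- Weak reversibility: every connected component of the directed graph `(C, R)`
is strongly connected. -/
def WeaklyReversible (R : Finset (Rxn S)) : Prop :=
  ∀ y z, undirReach R y z → dirReach R y z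

/-- The set of complex balanced equilibria `Z₊(N, K)` of a kinetics `K` on the
(sub)network with reaction set `R`: positive vectors `x` with `I_a K(x) = 0`. -/
def Zplus (R : Finset (Rxn S)) (K : (S → ℝ) → Rxn S → ℝ) : Set (S → ℝ) :=
  {x | (∀ s, 0 < x s) ∧ ∑ r ∈ R, K x r • (omegaC r.2 - omegaC r.1) = 0}

/-- The reactions lying in the linkage class of the zero complex. -/
def zeroLinkReactions (R : Finset (Rxn S)) : Finset (Rxn S) :=
  R.filter fun r => undirReach R 0 r.1

/-- The reaction set of the linkage class `c`: all reactions whose complexes lie in `c`. -/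
def lcReactions (R : Finset (Rxn S)) (c : (linkGraph R).ConnectedComponent) :
    Finset (Rxn S) :=
  R.filter fun r => ∃ h : r.1 ∈ complexesOf R, (linkGraph R).connectedComponentMk ⟨r.1, h⟩ = c

/-- The network has independent linkage classes (ILC): the linkage class
decomposition is independent. -/
def HasILC (R : Finset (Rxn S)) : Prop := IsIndependent R (lcReactions R)

/-!
Send each block of the fine decomposition to the coarse block containing it. Since the coarse
blocks are disjoint, each coarse block is the union of the fine blocks sent to it, so its
stoichiometric subspace is the sum of theirs. Grouping an independent family of submodules along
the fibres of a map keeps it independent, because in a modular, compactly generated lattice the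
suprema of an independent family over disjoint index sets are disjoint.
-/

theorem iSupIndep.biSup_fibers {α ι κ : Type*} [CompleteLattice α] [IsModularLattice α]
    [IsCompactlyGenerated α] {t : ι → α} (ht : iSupIndep t) (φ : ι → κ) :
    iSupIndep fun j => ⨆ i ∈ φ ⁻¹' {j}, t i := by
  intro j
  have hrest : (⨆ (j' : κ) (_ : j' ≠ j), ⨆ i ∈ φ ⁻¹' {j'}, t i) ≤ ⨆ i ∈ (φ ⁻¹' {j})ᶜ, t i :=
    iSup₂_le fun j' hj' => biSup_mono fun i (hi : φ i = j') => (hi ▸ hj' : φ i ≠ j)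
  exact (ht.disjoint_biSup_biSup disjoint_compl_right).mono_right hrest

section

omit [Fintype S]

lemma stoichSubspace_mono {R₁ R₂ : Finset (Rxn S)} (h : R₁ ⊆ R₂) :
    stoichSubspace R₁ ≤ stoichSubspace R₂ :=
  Submodule.span_mono (Set.image_mono (Finset.coe_subset.mpr h))

lemma stoichSubspace_le_iff {R : Finset (Rxn S)} {V : Submodule ℝ (S → ℝ)} :
    stoichSubspace R ≤ V ↔ ∀ r ∈ R, r.2 - r.1 ∈ V := by
  rw [stoichSubspace, Submodule.span_le, Set.image_subset_iff]
  rfl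

lemma sub_mem_stoichSubspace {R : Finset (Rxn S)} {r : Rxn S} (hr : r ∈ R) :
    r.2 - r.1 ∈ stoichSubspace R :=
  stoichSubspace_le_iff.mp le_rfl r hr

lemma IsCovering.iSup_stoichSubspace {ι : Type*} {R : Finset (Rxn S)} {f : ι → Finset (Rxn S)}
    (hf : IsCovering R f) : ⨆ i, stoichSubspace (f i) = stoichSubspace R := by
  refine le_antisymm (iSup_le fun i => stoichSubspace_mono (hf.1 i)) ?_
  refine stoichSubspace_le_iff.mpr fun r hr => ?_
  obtain ⟨i, hri⟩ := hf.2 r hr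
  exact Submodule.mem_iSup_of_mem i (sub_mem_stoichSubspace hri)

lemma IsDecomposition.isCovering {ι : Type*} {R : Finset (Rxn S)} {f : ι → Finset (Rxn S)}
    (hf : IsDecomposition R f) : IsCovering R f :=
  hf.2.2

lemma stoichSubspace_eq_biSup_fiber {ι κ : Type*} {R : Finset (Rxn S)}
    {f : ι → Finset (Rxn S)} {g : κ → Finset (Rxn S)} (hf : IsCovering R f)
    (hgR : ∀ j, g j ⊆ R) (hg : Pairwise fun j j' => Disjoint (g j) (g j'))
    {φ : ι → κ} (hφ : ∀ i, f i ⊆ g (φ i)) (j : κ) :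
    stoichSubspace (g j) = ⨆ i ∈ φ ⁻¹' {j}, stoichSubspace (f i) := by
  refine le_antisymm (stoichSubspace_le_iff.mpr fun r hr => ?_)
    (iSup₂_le fun i (hi : φ i = j) => hi ▸ stoichSubspace_mono (hφ i))
  obtain ⟨i, hri⟩ := hf.2 r (hgR j hr)
  have hi : φ i = j := by
    by_contra hne
    exact Finset.disjoint_left.mp (hg hne) (hφ i hri) hr
  exact Submodule.mem_iSup_of_mem i (Submodule.mem_iSup_of_mem hi (sub_mem_stoichSubspace hri))

end

theorem stmt_1_general (R : Finset (Rxn S)) {k k' : ℕ}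
    (f : Fin k → Finset (Rxn S)) (g : Fin k' → Finset (Rxn S))
    (hf : IsDecomposition R f) (hg : IsDecomposition R g)
    (hcoarse : IsCoarsening f g) (hind : IsIndependent R f) :
    IsIndependent R g := by
  choose φ hφ using fun i => (hcoarse i).exists
  have hfibers : (fun j => stoichSubspace (g j)) = fun j => ⨆ i ∈ φ ⁻¹' {j}, stoichSubspace (f i) :=
    funext (stoichSubspace_eq_biSup_fiber hf.isCovering hg.2.2.1 hg.2.1 hφ)
  refine ⟨hg.isCovering.iSup_stoichSubspace, ?_⟩
  rw [hfibers]
  exact hind.2.biSup_fibers φ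

/-- any coarsening of an independent decomposition is independent. -/
theorem stmt_1 (C : Finset (S → ℝ)) (R : Finset (Rxn S)) {k k' : ℕ}
    (f : Fin k → Finset (Rxn S)) (g : Fin k' → Finset (Rxn S))
    (hcrn : IsCRN C R) (hf : IsDecomposition R f) (hg : IsDecomposition R g)
    (hcoarse : IsCoarsening f g) (hind : IsIndependent R f) :
    IsIndependent R g :=
  stmt_1_general R f g hf hg hcoarse hind

end
end

section
/- For an incidence independent decomposition N = N_1 ∪ ... ∪ N_k of a chemical reaction network, the deficiencies satisfy δ ≥ δ_1 + ... + δ_k. -/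
open scoped Classical

noncomputable section

variable {S : Type*} [Fintype S]

/-!
The deficiency is `δ = dim Im I_a - s`: for any graph, the functionals annihilating the span
of the edge differences `ω_b - ω_a` are, through the dot product, the kernel of the graph
Laplacian, which has dimension `l`; hence `dim Im I_a = n - l`. Incidence independence makes
`dim Im I_a` additive over the decomposition, while `S = S_1 + ... + S_k` only gives
`s ≤ s_1 + ... + s_k`.
-/

open Module

theorem Submodule.finrank_iSup_le_sum {K M ι : Type*} [Field K] [AddCommGroup M] [Module K M]
    [Fintype ι] (p : ι → Submodule K M) [∀ i, FiniteDimensional K (p i)] :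
    finrank K ↥(⨆ i, p i) ≤ ∑ i, finrank K (p i) := by
  classical
  rw [Submodule.iSup_eq_range_dfinsupp_lsum, ← finrank_directSum]
  exact LinearMap.finrank_range_le _

theorem iSupIndep.finrank_iSup {K M ι : Type*} [Field K] [AddCommGroup M] [Module K M]
    [Fintype ι] {p : ι → Submodule K M} [∀ i, FiniteDimensional K (p i)] (hp : iSupIndep p) :
    finrank K ↥(⨆ i, p i) = ∑ i, finrank K (p i) := by
  classical
  rw [Submodule.iSup_eq_range_dfinsupp_lsum,
    LinearMap.finrank_range_of_inj hp.dfinsupp_lsum_injective]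
  exact finrank_directSum _ _

namespace SimpleGraph

variable {V : Type*} [Fintype V] [DecidableEq V] (G : SimpleGraph V)

def incidenceSpan : Submodule ℝ (V → ℝ) :=
  Submodule.span ℝ (Set.range fun d : G.Dart => Pi.single d.snd 1 - Pi.single d.fst 1)

/-- A functional kills every edge difference iff its coefficient vector is constant along
edges, which is the kernel of the Laplacian. -/
theorem dualAnnihilator_incidenceSpan [DecidableRel G.Adj] :
    G.incidenceSpan.dualAnnihilator =
      (LinearMap.ker (G.lapMatrix ℝ).toLin').map
        (dotProductEquiv ℝ V : (V → ℝ) →ₗ[ℝ] Dual ℝ (V → ℝ)) := by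
  ext φ
  rw [Submodule.map_equiv_eq_comap_symm, Submodule.mem_comap, LinearMap.mem_ker,
    Matrix.toLin'_apply, lapMatrix_mulVec_eq_zero_iff_forall_adj, incidenceSpan,
    ← SetLike.mem_coe, Submodule.coe_dualAnnihilator_span]
  simp only [Set.range_subset_iff, SetLike.mem_coe, LinearMap.mem_ker, map_sub, sub_eq_zero,
    Set.mem_ofPred_eq, LinearEquiv.coe_coe, dotProductEquiv_symm_apply, LinearMap.coe_single]
  exact ⟨fun h i j hij => (h ⟨(i, j), hij⟩).symm, fun h d => (h _ _ d.adj).symm⟩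

theorem finrank_incidenceSpan_add_card_connectedComponent :
    finrank ℝ G.incidenceSpan + Nat.card G.ConnectedComponent = Nat.card V := by
  classical
  rw [Nat.card_eq_fintype_card, card_connectedComponent_eq_finrank_ker_toLin'_lapMatrix,
    ← (dotProductEquiv ℝ V).finrank_map_eq (LinearMap.ker _), ← dualAnnihilator_incidenceSpan,
    Subspace.finrank_add_finrank_dualAnnihilator_eq, Module.finrank_fintype_fun_eq_card,
    Nat.card_eq_fintype_card]

end SimpleGraph

instance incImage.finiteDimensional (R : Finset (Rxn S)) : FiniteDimensional ℝ (incImage R) :=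
  FiniteDimensional.span_of_finite ℝ (R.finite_toSet.image _)

theorem extendByZero_single_eq_omegaC {p : (S → ℝ) → Prop} (v : Subtype p) :
    Function.ExtendByZero.linearMap ℝ Subtype.val (Pi.single v 1) = omegaC v.1 := by
  funext z
  rw [Function.ExtendByZero.linearMap_apply]
  by_cases hz : ∃ w : Subtype p, w.1 = z
  · obtain ⟨w, rfl⟩ := hz
    rw [Subtype.val_injective.extend_apply]
    by_cases hw : w = v
    · simp [hw, omegaC]
    · simp [hw, omegaC, Subtype.val_injective.ne hw]
  · rw [Function.extend_apply' _ _ _ hz]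
    have hzv : z ≠ v.1 := fun h => hz ⟨v, h.symm⟩
    simp [omegaC, hzv]

/-- Reactions `y → y` are not edges of the linkage graph; they contribute `0` to `incImage R`. -/
theorem incImage_eq_map_incidenceSpan (R : Finset (Rxn S)) :
    incImage R =
      (linkGraph R).incidenceSpan.map (Function.ExtendByZero.linearMap ℝ Subtype.val) := by
  rw [SimpleGraph.incidenceSpan, Submodule.map_span, incImage]
  apply le_antisymm <;> rw [Submodule.span_le]
  · rintro _ ⟨r, hr, rfl⟩
    by_cases hloop : r.1 = r.2
    · simp only [hloop, sub_self, SetLike.mem_coe, zero_mem]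
    · let a : {y // y ∈ complexesOf R} :=
        ⟨r.1, Finset.mem_union_left _ (Finset.mem_image_of_mem _ hr)⟩
      let b : {y // y ∈ complexesOf R} :=
        ⟨r.2, Finset.mem_union_right _ (Finset.mem_image_of_mem _ hr)⟩
      let d : (linkGraph R).Dart := ⟨(a, b), fun h => hloop (congrArg Subtype.val h), Or.inl hr⟩
      refine Submodule.subset_span ⟨Pi.single b 1 - Pi.single a 1, ⟨d, rfl⟩, ?_⟩
      rw [map_sub, extendByZero_single_eq_omegaC, extendByZero_single_eq_omegaC]
  · rintro _ ⟨_, ⟨d, rfl⟩, rfl⟩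
    rw [map_sub, extendByZero_single_eq_omegaC, extendByZero_single_eq_omegaC]
    rcases d.adj.2 with hr | hr
    · exact Submodule.subset_span ⟨_, hr, rfl⟩
    · rw [← neg_sub]
      exact neg_mem (Submodule.subset_span ⟨_, hr, rfl⟩)

theorem finrank_incImage_add_numLinkageClasses (R : Finset (Rxn S)) :
    finrank ℝ (incImage R) + numLinkageClasses R = numComplexes R := by
  rw [incImage_eq_map_incidenceSpan, ← LinearEquiv.finrank_eq (Submodule.equivMapOfInjective _
    (Function.extend_injective Subtype.val_injective _) _), numComplexes, ← Nat.card_eq_finsetCard]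
  exact (linkGraph R).finrank_incidenceSpan_add_card_connectedComponent

theorem deficiency_eq_finrank_incImage_sub_crnRank (R : Finset (Rxn S)) :
    deficiency R = finrank ℝ (incImage R) - crnRank R := by
  have := finrank_incImage_add_numLinkageClasses R
  unfold deficiency
  omega

omit [Fintype S] in
theorem stoichSubspace_le_iSup {ι : Type*} {R : Finset (Rxn S)} {f : ι → Finset (Rxn S)}
    (hf : ∀ r ∈ R, ∃ i, r ∈ f i) : stoichSubspace R ≤ ⨆ i, stoichSubspace (f i) := by
  rw [stoichSubspace, Submodule.span_le]
  rintro _ ⟨r, hr, rfl⟩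
  obtain ⟨i, hi⟩ := hf r hr
  exact le_iSup (fun i => stoichSubspace (f i)) i (Submodule.subset_span ⟨r, hi, rfl⟩)

theorem stmt_3_general (R : Finset (Rxn S)) {k : ℕ}
    (f : Fin k → Finset (Rxn S))
    (hdec : IsDecomposition R f) (hinc : IsIncidenceIndependent R f) :
    ∑ i, deficiency (f i) ≤ deficiency R := by
  obtain ⟨-, -, -, hcov⟩ := hdec
  have hinc_rank : ∑ i, finrank ℝ (incImage (f i)) = finrank ℝ (incImage R) := by
    rw [← hinc.2.finrank_iSup, hinc.1]
  have hrank : crnRank R ≤ ∑ i, crnRank (f i) :=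
    (Submodule.finrank_mono (stoichSubspace_le_iSup hcov)).trans
      (Submodule.finrank_iSup_le_sum _)
  simp only [deficiency_eq_finrank_incImage_sub_crnRank, Finset.sum_sub_distrib]
  rw [← Nat.cast_sum, ← Nat.cast_sum, hinc_rank]
  gcongr

/-- for an incidence independent decomposition, δ ≥ δ_1 + ... + δ_k. -/
theorem stmt_3 (C : Finset (S → ℝ)) (R : Finset (Rxn S)) {k : ℕ}
    (f : Fin k → Finset (Rxn S)) (hcrn : IsCRN C R)
    (hdec : IsDecomposition R f) (hinc : IsIncidenceIndependent R f) :
    ∑ i, deficiency (f i) ≤ deficiency R :=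
  stmt_3_general R f hdec hinc
end
end

section
/- If a decomposition of a chemical reaction network is incidence independent, then any coarsening of the decomposition is incidence independent. -/
open scoped Classical

noncomputable section

variable {S : Type*} [Fintype S]

theorem iSupIndep.iSup_fiber {α ι κ : Type*} [CompleteLattice α] [IsModularLattice α]
    [IsCompactlyGenerated α] {t : ι → α} (ht : iSupIndep t) (σ : ι → κ) :
    iSupIndep fun j => ⨆ (i) (_ : σ i = j), t i := by
  intro j
  have hfibres : Disjoint (⨆ i ∈ {i | σ i = j}, t i) (⨆ i ∈ {i | σ i ≠ j}, t i) :=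
    ht.disjoint_biSup_biSup (Set.disjoint_left.mpr fun _ hi hi' => hi' hi)
  refine hfibres.mono le_rfl (iSup₂_le fun j' hj' => iSup₂_le fun i hi => ?_)
  exact le_biSup t (show σ i ≠ j from hi ▸ hj')

theorem incImage_mono {R R' : Finset (Rxn S)} (h : R ⊆ R') : incImage R ≤ incImage R' :=
  Submodule.span_mono (Set.image_mono (Finset.coe_subset.mpr h))

/-- `g j` is the union of the blocks `f i` with `σ i = j`: a reaction of `g j` lies in some
`f i ⊆ g (σ i)`, and the blocks of `g` are disjoint. -/
theorem incImage_eq_iSup_fiber {ι κ : Type*} {R : Finset (Rxn S)}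
    {f : ι → Finset (Rxn S)} {g : κ → Finset (Rxn S)} (hf : IsDecomposition R f)
    (hg : IsDecomposition R g) {σ : ι → κ} (hσ : ∀ i, f i ⊆ g (σ i)) (j : κ) :
    incImage (g j) = ⨆ (i) (_ : σ i = j), incImage (f i) := by
  refine le_antisymm (Submodule.span_le.mpr ?_) (iSup₂_le fun i hi => hi ▸ incImage_mono (hσ i))
  rintro _ ⟨r, hr, rfl⟩
  obtain ⟨i, hri⟩ := hf.2.2.2 r (hg.2.2.1 j hr)
  have hi : σ i = j := by
    by_contra hne
    exact Finset.disjoint_left.mp (hg.2.1 hne) (hσ i hri) hr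
  refine (le_iSup₂_of_le (f := fun i (_ : σ i = j) => incImage (f i)) i hi le_rfl) ?_
  exact Submodule.subset_span (Set.mem_image_of_mem _ hri)

theorem stmt_4_general (R : Finset (Rxn S)) {k k' : ℕ}
    (f : Fin k → Finset (Rxn S)) (g : Fin k' → Finset (Rxn S))
    (hf : IsDecomposition R f) (hg : IsDecomposition R g)
    (hcoarse : IsCoarsening f g) (hinc : IsIncidenceIndependent R f) :
    IsIncidenceIndependent R g := by
  choose σ hσ _ using hcoarse
  have hblocks := incImage_eq_iSup_fiber hf hg hσ
  constructor
  · refine le_antisymm (iSup_le fun j => incImage_mono (hg.2.2.1 j)) ?_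
    rw [← hinc.1]
    exact iSup_le fun i => (incImage_mono (hσ i)).trans (le_iSup (fun j => incImage (g j)) (σ i))
  · simpa only [hblocks] using hinc.2.iSup_fiber σ

/-- any coarsening of an incidence independent decomposition is
incidence independent. -/
theorem stmt_4 (C : Finset (S → ℝ)) (R : Finset (Rxn S)) {k k' : ℕ}
    (f : Fin k → Finset (Rxn S)) (g : Fin k' → Finset (Rxn S))
    (hcrn : IsCRN C R) (hf : IsDecomposition R f) (hg : IsDecomposition R g)
    (hcoarse : IsCoarsening f g) (hinc : IsIncidenceIndependent R f) :
    IsIncidenceIndependent R g :=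
  stmt_4_general R f g hf hg hcoarse hinc

end
end

section
/- (Structure Theorem for C-decompositions) Let L_1, ..., L_l be the linkage classes of a chemical reaction network N. A decomposition N = N_1 ∪ ... ∪ N_k is a C-decomposition if and only if each subnetwork N_i is a union of linkage classes and each linkage class is contained in exactly one N_i; in other words, the linkage class decomposition is a refinement of the given decomposition. -/
open scoped Classical

noncomputable section

variable {S : Type*} [Fintype S]

/-!
In a 𝒞-decomposition a reaction lies in the block containing either of its complexes, so the
complex set of each block is closed under adjacency, i.e. is a union of linkage classes.
Conversely, a complex shared by two blocks puts reactions of both blocks into its linkage class;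
if that class lies in a single block, the two blocks coincide.
-/

section LinkageClasses

variable {R : Finset (Rxn S)} {r : Rxn S} {y : S → ℝ}

lemma fst_mem_complexesOf (hr : r ∈ R) : r.1 ∈ complexesOf R :=
  Finset.mem_union_left _ (Finset.mem_image_of_mem _ hr)

lemma snd_mem_complexesOf (hr : r ∈ R) : r.2 ∈ complexesOf R :=
  Finset.mem_union_right _ (Finset.mem_image_of_mem _ hr)

lemma mem_complexesOf : y ∈ complexesOf R ↔ ∃ r ∈ R, r.1 = y ∨ r.2 = y := by
  simp only [complexesOf, Finset.mem_union, Finset.mem_image, ← exists_or, ← and_or_left]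

lemma complexesOf_mono {R' : Finset (Rxn S)} (h : R ⊆ R') : complexesOf R ⊆ complexesOf R' :=
  Finset.union_subset_union (Finset.image_subset_image h) (Finset.image_subset_image h)

lemma connectedComponentMk_fst_eq_snd (hr : r ∈ R) :
    (linkGraph R).connectedComponentMk ⟨r.1, fst_mem_complexesOf hr⟩ =
      (linkGraph R).connectedComponentMk ⟨r.2, snd_mem_complexesOf hr⟩ := by
  by_cases hloop : r.1 = r.2
  · exact congrArg _ (Subtype.ext hloop)
  · exact SimpleGraph.ConnectedComponent.sound
      (SimpleGraph.Adj.reachable ⟨fun h => hloop (congrArg Subtype.val h), Or.inl hr⟩)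

lemma mem_lcReactions_of_mem_complexesOf (hr : r ∈ R) (hry : r.1 = y ∨ r.2 = y)
    (hy : y ∈ complexesOf R) : r ∈ lcReactions R ((linkGraph R).connectedComponentMk ⟨y, hy⟩) := by
  refine Finset.mem_filter.mpr ⟨hr, fst_mem_complexesOf hr, ?_⟩
  rcases hry with rfl | rfl
  · rfl
  · exact connectedComponentMk_fst_eq_snd hr

lemma lcReactions_nonempty (c : (linkGraph R).ConnectedComponent) : (lcReactions R c).Nonempty := by
  obtain ⟨⟨y, hy⟩, rfl⟩ := c.exists_rep
  obtain ⟨r, hr, hry⟩ := mem_complexesOf.mp hy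
  exact ⟨r, mem_lcReactions_of_mem_complexesOf hr hry hy⟩

def lcUnion (R : Finset (Rxn S)) (T : Set (linkGraph R).ConnectedComponent) : Finset (Rxn S) :=
  R.filter fun r => ∃ h : r.1 ∈ complexesOf R, (linkGraph R).connectedComponentMk ⟨r.1, h⟩ ∈ T

end LinkageClasses

section Decompositions

variable {ι : Type*} {R : Finset (Rxn S)} {f : ι → Finset (Rxn S)} {r : Rxn S}

omit [Fintype S] in
lemma eq_of_mem_of_pairwise_disjoint (hdisj : Pairwise fun i j => Disjoint (f i) (f j))
    {i j : ι} (hi : r ∈ f i) (hj : r ∈ f j) : i = j :=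
  (hdisj.pairwiseDisjoint Set.univ).elim_finset trivial trivial r hi hj

lemma CDisjoint.eq_of_mem_complexesOf (hC : CDisjoint f) {y : S → ℝ} {i j : ι}
    (hi : y ∈ complexesOf (f i)) (hj : y ∈ complexesOf (f j)) : i = j :=
  (hC.pairwiseDisjoint Set.univ).elim_finset (f := fun i => complexesOf (f i)) trivial trivial y hi hj

lemma existsUnique_lcReactions_subset (hdisj : Pairwise fun i j => Disjoint (f i) (f j))
    (hcov : ∀ r ∈ R, ∃ i, r ∈ f i)
    (hunion : ∀ i, ∃ T, f i = lcUnion R T) (c : (linkGraph R).ConnectedComponent) :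
    ∃! i, lcReactions R c ⊆ f i := by
  obtain ⟨r, hr⟩ := lcReactions_nonempty c
  obtain ⟨hrR, _, hrc⟩ := Finset.mem_filter.mp hr
  obtain ⟨j, hj⟩ := hcov r hrR
  obtain ⟨T, hT⟩ := hunion j
  have hcT : c ∈ T := by
    obtain ⟨-, _, hmem⟩ := Finset.mem_filter.mp (hT ▸ hj)
    rwa [← hrc]
  refine ⟨j, fun r' hr' => ?_, fun i hi => eq_of_mem_of_pairwise_disjoint hdisj (hi hr) hj⟩
  obtain ⟨hr'R, h', hr'c⟩ := Finset.mem_filter.mp hr'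
  exact hT ▸ Finset.mem_filter.mpr ⟨hr'R, h', hr'c ▸ hcT⟩

lemma cDisjoint_of_forall_lcReactions_subset (hdisj : Pairwise fun i j => Disjoint (f i) (f j))
    (hsub : ∀ i, f i ⊆ R) (h : ∀ c : (linkGraph R).ConnectedComponent, ∃ i, lcReactions R c ⊆ f i) :
    CDisjoint f := by
  intro i j hij
  refine Finset.disjoint_left.mpr fun y hyi hyj => hij ?_
  obtain ⟨r, hri, hry⟩ := mem_complexesOf.mp hyi
  obtain ⟨r', hr'j, hr'y⟩ := mem_complexesOf.mp hyj
  have hy := complexesOf_mono (hsub i) hyi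
  obtain ⟨l, hl⟩ := h ((linkGraph R).connectedComponentMk ⟨y, hy⟩)
  calc i = l := eq_of_mem_of_pairwise_disjoint hdisj hri
          (hl (mem_lcReactions_of_mem_complexesOf (hsub i hri) hry hy))
    _ = j := eq_of_mem_of_pairwise_disjoint hdisj
          (hl (mem_lcReactions_of_mem_complexesOf (hsub j hr'j) hr'y hy)) hr'j

end Decompositions

section CDisjoint

variable {ι : Type*} {R : Finset (Rxn S)} {f : ι → Finset (Rxn S)} {r : Rxn S}
variable (hC : CDisjoint f) (hcov : ∀ r ∈ R, ∃ i, r ∈ f i)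
include hC hcov

lemma CDisjoint.mem_of_fst_mem (hr : r ∈ R) {i : ι} (h : r.1 ∈ complexesOf (f i)) : r ∈ f i := by
  obtain ⟨j, hj⟩ := hcov r hr
  rwa [hC.eq_of_mem_complexesOf h (fst_mem_complexesOf hj)]

lemma CDisjoint.mem_of_snd_mem (hr : r ∈ R) {i : ι} (h : r.2 ∈ complexesOf (f i)) : r ∈ f i := by
  obtain ⟨j, hj⟩ := hcov r hr
  rwa [hC.eq_of_mem_complexesOf h (snd_mem_complexesOf hj)]

lemma CDisjoint.mem_complexesOf_of_reachable {i : ι} {a b : complexesOf R}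
    (hab : (linkGraph R).Reachable a b) (ha : a.1 ∈ complexesOf (f i)) :
    b.1 ∈ complexesOf (f i) := by
  rw [SimpleGraph.reachable_iff_reflTransGen] at hab
  induction hab with
  | refl => exact ha
  | tail _ hadj ih =>
    rcases hadj.2 with hr | hr
    · exact snd_mem_complexesOf (hC.mem_of_fst_mem hcov hr ih)
    · exact fst_mem_complexesOf (hC.mem_of_snd_mem hcov hr ih)

lemma CDisjoint.eq_lcUnion (hsub : ∀ i, f i ⊆ R) (i : ι) :
    f i = lcUnion R ((linkGraph R).connectedComponentMk '' {a | a.1 ∈ complexesOf (f i)}) := by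
  ext r
  simp only [lcUnion, Finset.mem_filter, Set.mem_image]
  constructor
  · intro hr
    have hrR := hsub i hr
    exact ⟨hrR, fst_mem_complexesOf hrR, _, fst_mem_complexesOf hr, rfl⟩
  · rintro ⟨hrR, _, a, ha, hcomp⟩
    exact hC.mem_of_fst_mem hcov hrR
      (hC.mem_complexesOf_of_reachable hcov (SimpleGraph.ConnectedComponent.exact hcomp) ha)

end CDisjoint

theorem stmt_7_general (R : Finset (Rxn S)) {k : ℕ}
    (f : Fin k → Finset (Rxn S)) (hdec : IsDecomposition R f) :
    CDisjoint f ↔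
      ((∀ i, ∃ T : Set (linkGraph R).ConnectedComponent,
          f i = R.filter fun r =>
            ∃ h : r.1 ∈ complexesOf R, (linkGraph R).connectedComponentMk ⟨r.1, h⟩ ∈ T) ∧
        ∀ c : (linkGraph R).ConnectedComponent, ∃! i, lcReactions R c ⊆ f i) := by
  obtain ⟨-, hdisj, hsub, hcov⟩ := hdec
  constructor
  · intro hC
    have hunion : ∀ i, ∃ T, f i = lcUnion R T := fun i => ⟨_, hC.eq_lcUnion hcov hsub i⟩
    exact ⟨hunion, existsUnique_lcReactions_subset hdisj hcov hunion⟩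
  · rintro ⟨-, hclass⟩
    exact cDisjoint_of_forall_lcReactions_subset hdisj hsub fun c => (hclass c).exists

/-- Structure Theorem for C-decompositions: a decomposition is a
C-decomposition iff each subnetwork is a union of linkage classes and each linkage
class is contained in exactly one subnetwork (the linkage class decomposition is a
refinement of the given decomposition). -/
theorem stmt_7 (C : Finset (S → ℝ)) (R : Finset (Rxn S)) {k : ℕ}
    (f : Fin k → Finset (Rxn S)) (hcrn : IsCRN C R) (hdec : IsDecomposition R f) :
    CDisjoint f ↔
      ((∀ i, ∃ T : Set (linkGraph R).ConnectedComponent,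
          f i = R.filter fun r =>
            ∃ h : r.1 ∈ complexesOf R, (linkGraph R).connectedComponentMk ⟨r.1, h⟩ ∈ T) ∧
        ∀ c : (linkGraph R).ConnectedComponent, ∃! i, lcReactions R c ⊆ f i) :=
  stmt_7_general R f hdec

end
end

section
/- Any C-decomposition of a chemical reaction network is incidence independent. -/
open scoped Classical

noncomputable section

variable {S : Type*} [Fintype S]

/-- Functions on complexes vanishing outside a set `A`. -/
def suppSub (A : Finset (S → ℝ)) : Submodule ℝ ((S → ℝ) → ℝ) where
  carrier := {g | ∀ z, z ∉ A → g z = 0}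
  add_mem' := fun hx hy z hz => by simp [Pi.add_apply, hx z hz, hy z hz]
  zero_mem' := fun z _ => rfl
  smul_mem' := fun c x hx z hz => by simp [Pi.smul_apply, hx z hz]

/-- Functions on complexes vanishing on a set `A`. -/
def vanSub (A : Finset (S → ℝ)) : Submodule ℝ ((S → ℝ) → ℝ) where
  carrier := {g | ∀ z ∈ A, g z = 0}
  add_mem' := fun hx hy z hz => by simp [Pi.add_apply, hx z hz, hy z hz]
  zero_mem' := fun z _ => rfl
  smul_mem' := fun c x hx z hz => by simp [Pi.smul_apply, hx z hz]

lemma incImage_le_suppSub (R : Finset (Rxn S)) :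
    incImage R ≤ suppSub (complexesOf R) := by
  rw [incImage, Submodule.span_le]
  rintro _ ⟨r, hr, rfl⟩ z hz
  have h1 : z ≠ r.1 := fun h => hz (by
    simp only [complexesOf, Finset.mem_union, Finset.mem_image]
    exact Or.inl ⟨r, hr, h.symm⟩)
  have h2 : z ≠ r.2 := fun h => hz (by
    simp only [complexesOf, Finset.mem_union, Finset.mem_image]
    exact Or.inr ⟨r, hr, h.symm⟩)
  simp [omegaC, h1, h2]

/-- any C-decomposition is incidence independent. -/
theorem stmt_9 (C : Finset (S → ℝ)) (R : Finset (Rxn S)) {k : ℕ}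
    (f : Fin k → Finset (Rxn S)) (hcrn : IsCRN C R) (hdec : IsDecomposition R f)
    (hC : CDisjoint f) :
    IsIncidenceIndependent R f := by
  obtain ⟨-, -, hsub, hcov⟩ := hdec
  constructor
  · -- sup equality
    have hR : (↑R : Set (Rxn S)) = ⋃ i, ↑(f i) := by
      ext r
      simp only [Set.mem_iUnion, Finset.mem_coe]
      exact ⟨fun hr => hcov r hr, fun ⟨i, hi⟩ => hsub i hi⟩
    simp only [incImage, hR, Set.image_iUnion, Submodule.span_iUnion]
  · -- independence
    have key : iSupIndep fun i => suppSub (complexesOf (f i)) := by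
      intro i
      rw [Submodule.disjoint_def]
      intro x hxi hxo
      have hxo' : x ∈ vanSub (complexesOf (f i)) := by
        have hle : (⨆ j, ⨆ _ : j ≠ i, suppSub (complexesOf (f j))) ≤
            vanSub (complexesOf (f i)) := by
          refine iSup_le fun j => iSup_le fun hj => ?_
          intro g hg z hz
          exact hg z (Finset.disjoint_left.mp (hC hj.symm) hz)
        exact hle hxo
      funext z
      by_cases hz : z ∈ complexesOf (f i)
      · exact hxo' z hz
      · exact hxi z hz
    exact key.mono fun i => incImage_le_suppSub (f i)

end
end

section
/- Let N = (S, C, R) be a chemical reaction network with a decomposition into subnetworks N_1, ..., N_k, and let K be any kinetics on N with restrictions K_i to the reaction subsets R_i. Then: (i) the intersection of the sets of complex balanced equilibria of the subnetworks is contained in the set of complex balanced equilibria of N, i.e. ∩_i Z_+(N_i, K_i) ⊆ Z_+(N, K); if moreover the decomposition is incidence independent, then (ii) Z_+(N, K) = ∩_i Z_+(N_i, K_i), and (iii) if Z_+(N, K) ≠ ∅ then Z_+(N_i, K_i) ≠ ∅ for each i. -/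
open scoped Classical

noncomputable section

variable {S : Type*} [Fintype S]

/-- (i) ∩ Z₊(N_i, K_i) ⊆ Z₊(N, K); if the decomposition is incidence
independent, (ii) Z₊(N, K) = ∩ Z₊(N_i, K_i) and (iii) Z₊(N, K) ≠ ∅ implies each
Z₊(N_i, K_i) ≠ ∅. -/
theorem stmt_12 (C : Finset (S → ℝ)) (R : Finset (Rxn S)) {k : ℕ}
    (f : Fin k → Finset (Rxn S)) (K : (S → ℝ) → Rxn S → ℝ)
    (hcrn : IsCRN C R) (hdec : IsDecomposition R f)
    (hK : ∀ x : S → ℝ, (∀ s, 0 < x s) → ∀ r, 0 ≤ K x r) :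
    ((⋂ i, Zplus (f i) K) ⊆ Zplus R K) ∧
    (IsIncidenceIndependent R f →
      Zplus R K = (⋂ i, Zplus (f i) K) ∧
      ((Zplus R K).Nonempty → ∀ i, (Zplus (f i) K).Nonempty)) := by
  obtain ⟨hne, hdisj, hsub, hcov⟩ := hdec
  have hR : R = Finset.univ.biUnion f := by
    ext r
    simp only [Finset.mem_biUnion, Finset.mem_univ, true_and]
    exact ⟨fun hr => hcov r hr, fun ⟨i, hi⟩ => hsub i hi⟩
  have hsum : ∀ x, ∑ r ∈ R, K x r • (omegaC r.2 - omegaC r.1) =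
      ∑ i, ∑ r ∈ f i, K x r • (omegaC r.2 - omegaC r.1) := by
    intro x
    rw [hR, Finset.sum_biUnion]
    intro i _ j _ hij
    exact hdisj hij
  have hk : 0 < k := by
    obtain ⟨r, hr⟩ := hcrn.2.1
    obtain ⟨i, _⟩ := hcov r hr
    exact i.pos
  have part1 : (⋂ i, Zplus (f i) K) ⊆ Zplus R K := by
    intro x hx
    have hx' : ∀ i, x ∈ Zplus (f i) K := fun i => Set.mem_iInter.mp hx i
    refine ⟨(hx' ⟨0, hk⟩).1, ?_⟩
    rw [hsum]
    exact Finset.sum_eq_zero fun i _ => (hx' i).2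
  refine ⟨part1, fun hind => ?_⟩
  have key : ∀ x ∈ Zplus R K, ∀ i, x ∈ Zplus (f i) K := by
    intro x hx i
    refine ⟨hx.1, ?_⟩
    set v : Fin k → ((S → ℝ) → ℝ) :=
      fun i => ∑ r ∈ f i, K x r • (omegaC r.2 - omegaC r.1) with hv
    have hvmem : ∀ i, v i ∈ incImage (f i) := by
      intro i
      refine Submodule.sum_mem _ fun r hr => Submodule.smul_mem _ _ ?_
      exact Submodule.subset_span ⟨r, hr, rfl⟩
    have hsum0 : ∑ j, v j = 0 := by rw [← hsum x]; exact hx.2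
    have hvi : v i = -∑ j ∈ Finset.univ.erase i, v j := by
      have h := Finset.add_sum_erase Finset.univ v (Finset.mem_univ i)
      rw [hsum0] at h
      exact eq_neg_of_add_eq_zero_left h
    -- v i ∈ p i ⊓ (⨆ j ≠ i, p j)
    have hmem2 : v i ∈ ⨆ j, ⨆ (_ : j ≠ i), incImage (f j) := by
      rw [hvi]
      refine Submodule.neg_mem _ (Submodule.sum_mem _ fun j hj => ?_)
      have hji : j ≠ i := (Finset.mem_erase.mp hj).1
      exact Submodule.mem_iSup_of_mem j (Submodule.mem_iSup_of_mem hji (hvmem j))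
    have := hind.2 i
    have hz : v i ∈ (⊥ : Submodule ℝ ((S → ℝ) → ℝ)) :=
      this.le_bot ⟨hvmem i, hmem2⟩
    simpa [hv] using hz
  constructor
  · apply Set.Subset.antisymm
    · intro x hx
      exact Set.mem_iInter.mpr (key x hx)
    · exact part1
  · rintro ⟨x, hx⟩ i
    exact ⟨x, key x hx i⟩

end
end

section
/- Any C*-decomposition of a chemical reaction network is incidence independent. -/
open scoped Classical

noncomputable section

variable {S : Type*} [Fintype S]

/-- Vectors supported in `A ∪ {0}` whose coordinates sum to zero. -/
def suppIn (A : Finset (S → ℝ)) : Submodule ℝ ((S → ℝ) → ℝ) where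
  carrier := {v | (∀ z, z ≠ 0 → z ∉ A → v z = 0) ∧ v 0 + ∑ z ∈ A, v z = 0}
  add_mem' := by
    rintro v w ⟨hv1, hv2⟩ ⟨hw1, hw2⟩
    refine ⟨fun z hz hzA => ?_, ?_⟩
    · simp [Pi.add_apply, hv1 z hz hzA, hw1 z hz hzA]
    · simp only [Pi.add_apply, Finset.sum_add_distrib]
      linarith
  zero_mem' := by simp
  smul_mem' := by
    rintro c v ⟨hv1, hv2⟩
    refine ⟨fun z hz hzA => by simp [hv1 z hz hzA], ?_⟩
    simp only [Pi.smul_apply, smul_eq_mul, ← Finset.mul_sum]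
    rw [← mul_add, hv2, mul_zero]

/-- Vectors vanishing on `A`. -/
def vanishOn (A : Finset (S → ℝ)) : Submodule ℝ ((S → ℝ) → ℝ) where
  carrier := {v | ∀ z ∈ A, v z = 0}
  add_mem' := fun hv hw z hz => by simp [hv z hz, hw z hz]
  zero_mem' := by simp
  smul_mem' := fun c v hv z hz => by simp [hv z hz]

lemma incImage_le_suppIn (Q : Finset (Rxn S)) :
    incImage Q ≤ suppIn (nonzeroComplexesOf Q) := by
  rw [incImage, Submodule.span_le]
  rintro _ ⟨r, hr, rfl⟩
  have h1 : r.1 ∈ complexesOf Q := Finset.mem_union_left _ (Finset.mem_image_of_mem _ hr)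
  have h2 : r.2 ∈ complexesOf Q := Finset.mem_union_right _ (Finset.mem_image_of_mem _ hr)
  constructor
  · intro z hz hzA
    have hz1 : z ≠ r.1 := by
      rintro rfl; exact hzA (Finset.mem_erase.mpr ⟨hz, h1⟩)
    have hz2 : z ≠ r.2 := by
      rintro rfl; exact hzA (Finset.mem_erase.mpr ⟨hz, h2⟩)
    simp [omegaC, hz1, hz2]
  · have key : ∀ y ∈ complexesOf Q,
        (omegaC y 0 + ∑ z ∈ nonzeroComplexesOf Q, omegaC y z) = 1 := by
      intro y hy
      by_cases hy0 : y = (0 : S → ℝ)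
      · subst hy0
        have : ∀ z ∈ nonzeroComplexesOf Q, omegaC (0 : S → ℝ) z = 0 := by
          intro z hz
          simp [omegaC, (Finset.mem_erase.mp hz).1]
        rw [Finset.sum_congr rfl this]
        simp [omegaC]
      · have hyA : y ∈ nonzeroComplexesOf Q := Finset.mem_erase.mpr ⟨hy0, hy⟩
        have : (∑ z ∈ nonzeroComplexesOf Q, omegaC y z) = 1 := by
          rw [show (fun z => omegaC y z) = fun z => if z = y then (1:ℝ) else 0 from rfl]
          rw [Finset.sum_ite_eq' (nonzeroComplexesOf Q) y (fun _ => (1:ℝ))]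
          simp [hyA]
        rw [this]
        simp [omegaC, Ne.symm hy0]
    have k1 := key r.1 h1
    have k2 := key r.2 h2
    simp only [Pi.sub_apply, Finset.sum_sub_distrib]
    linarith

lemma suppIn_le_vanishOn {A B : Finset (S → ℝ)} (hd : Disjoint A B)
    (h0 : (0 : S → ℝ) ∉ B) : suppIn A ≤ vanishOn B := by
  rintro v ⟨hv1, _⟩ z hz
  exact hv1 z (fun h => h0 (h ▸ hz)) (fun h => (Finset.disjoint_left.mp hd h) hz)

/-- any C*-decomposition is incidence independent. -/
theorem stmt_16 (C : Finset (S → ℝ)) (R : Finset (Rxn S)) {k : ℕ}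
    (f : Fin k → Finset (Rxn S)) (hcrn : IsCRN C R) (hdec : IsDecomposition R f)
    (hstar : CstarDisjoint f) :
    IsIncidenceIndependent R f := by
  obtain ⟨-, -, hsub, hcov⟩ := hdec
  constructor
  · have hU : (↑R : Set (Rxn S)) = ⋃ i, ↑(f i) := by
      ext r
      simp only [Set.mem_iUnion, Finset.mem_coe]
      exact ⟨fun hr => hcov r hr, fun ⟨i, hi⟩ => hsub i hi⟩
    simp only [incImage, hU, Set.image_iUnion, Submodule.span_iUnion]
  · intro i
    rw [Submodule.disjoint_def]
    intro v hvi hvrest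
    have h1 : v ∈ suppIn (nonzeroComplexesOf (f i)) := incImage_le_suppIn (f i) hvi
    have h2 : v ∈ vanishOn (nonzeroComplexesOf (f i)) := by
      refine (iSup_le fun j => iSup_le fun hj => ?_ : _ ≤ vanishOn _) hvrest
      exact le_trans (incImage_le_suppIn (f j))
        (suppIn_le_vanishOn (hstar hj) (fun h => (Finset.mem_erase.mp h).1 rfl))
    obtain ⟨hv1, hv2⟩ := h1
    have hsum : ∑ z ∈ nonzeroComplexesOf (f i), v z = 0 :=
      Finset.sum_eq_zero fun z hz => h2 z hz
    have hv0 : v 0 = 0 := by linarith [hv2, hsum]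
    funext z
    by_cases hz0 : z = 0
    · simpa [hz0] using hv0
    · by_cases hzA : z ∈ nonzeroComplexesOf (f i)
      · exact h2 z hzA
      · exact hv1 z hz0 hzA

end
end

section
/- Let m be a positive integer with species X_1, ..., X_m (identified with the standard basis vectors e_1, ..., e_m of ℝ^m), and for each i let R_i and P_i be subsets of the species with R̲_i and P̲_i the sums of their elements (vectors in ℝ^m with 0/1 coordinates). Consider the chemical reaction network whose reactions are the pairs R'_i = { R̲_i → X_i + R̲_i, X_i + P̲_i → P̲_i } for i = 1, ..., m (the embedded representation of an S-system). Then the reaction sets R'_1, ..., R'_m are pairwise disjoint and form an independent decomposition of the network: the stoichiometric subspace of each subnetwork is span{X_i}, the network rank is s = m, and s = s_1 + ... + s_m. -/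
open scoped Classical

noncomputable section

variable {S : Type*} [Fintype S]

/- Each pair `R'_i` consists of a synthesis and a degradation reaction of `X_i`, with reaction
vectors `e_i` and `-e_i` whatever the complexes `R̲_i`, `P̲_i` are. Hence the `i`-th subnetwork has
stoichiometric subspace `span {e_i}`, two distinct pairs cannot share a reaction, and independence
of the decomposition is the direct sum decomposition `ℝ^m = ⊕ span {e_i}`. -/

section EmbeddedRepresentation

variable {σ ι : Type*}

lemma iSup_span_single_eq_top [Finite σ] [DecidableEq σ] :
    ⨆ i : σ, Submodule.span ℝ {(Pi.single i 1 : σ → ℝ)} = ⊤ := by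
  rw [← Submodule.span_iUnion, Set.iUnion_singleton_eq_range]
  convert (Pi.basisFun ℝ σ).span_eq
  simp

lemma stoichSubspace_sup [DecidableEq (Rxn σ)] (s : Finset ι) (f : ι → Finset (Rxn σ)) :
    stoichSubspace (s.sup f) = ⨆ i ∈ s, stoichSubspace (f i) := by
  rw [stoichSubspace, Finset.sup_eq_biUnion, Finset.coe_biUnion, Set.image_iUnion₂,
    Submodule.span_iUnion₂]
  rfl

lemma isDecomposition_sup [DecidableEq (Rxn σ)] [Fintype ι] {f : ι → Finset (Rxn σ)}
    (hne : ∀ i, (f i).Nonempty) (hdisj : Pairwise fun i j => Disjoint (f i) (f j)) :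
    IsDecomposition (Finset.univ.sup f) f :=
  ⟨hne, hdisj, fun i => Finset.le_sup (Finset.mem_univ i), fun r hr => by
    simpa using Finset.mem_sup.mp hr⟩

lemma isIndependent_sup [DecidableEq (Rxn σ)] [Fintype ι] {f : ι → Finset (Rxn σ)}
    (hindep : iSupIndep fun i => stoichSubspace (f i)) :
    IsIndependent (Finset.univ.sup f) f :=
  ⟨by simp [stoichSubspace_sup], hindep⟩

variable [DecidableEq (Rxn σ)]

/-- `R'_i = {R̲_i → X_i + R̲_i, X_i + P̲_i → P̲_i}` is `embeddedPair X_i R̲_i P̲_i`. -/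
def embeddedPair (e u v : σ → ℝ) : Finset (Rxn σ) := {(u, e + u), (e + v, v)}

lemma embeddedPair_nonempty (e u v : σ → ℝ) : (embeddedPair e u v).Nonempty :=
  Finset.insert_nonempty _ _

lemma sub_eq_or_eq_neg_of_mem_embeddedPair {e u v : σ → ℝ} {r : Rxn σ}
    (hr : r ∈ embeddedPair e u v) : r.2 - r.1 = e ∨ r.2 - r.1 = -e := by
  simp only [embeddedPair, Finset.mem_insert, Finset.mem_singleton] at hr
  rcases hr with rfl | rfl
  · exact Or.inl (add_sub_cancel_right e u)
  · exact Or.inr (sub_add_cancel_right v e)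

lemma stoichSubspace_embeddedPair (e u v : σ → ℝ) :
    stoichSubspace (embeddedPair e u v) = Submodule.span ℝ {e} := by
  have himage : (fun r : Rxn σ => r.2 - r.1) '' ↑(embeddedPair e u v) = {-e, e} := by
    simp only [embeddedPair, Finset.coe_insert, Finset.coe_singleton, Set.image_insert_eq,
      Set.image_singleton, add_sub_cancel_right, sub_add_cancel_right, Set.pair_comm]
  rw [stoichSubspace, himage, Submodule.span_insert_eq_span]
  exact Submodule.neg_mem _ (Submodule.mem_span_singleton_self e)

lemma disjoint_embeddedPair_single [DecidableEq σ] {i j : σ} (hij : i ≠ j) (u v u' v' : σ → ℝ) :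
    Disjoint (embeddedPair (Pi.single i 1) u v) (embeddedPair (Pi.single j 1) u' v') := by
  rw [Finset.disjoint_left]
  intro r hri hrj
  rcases sub_eq_or_eq_neg_of_mem_embeddedPair hri with h | h <;>
    rcases sub_eq_or_eq_neg_of_mem_embeddedPair hrj with h' | h' <;>
    simpa [hij] using congrFun (h.symm.trans h') i

end EmbeddedRepresentation

theorem stmt_18_general (m : ℕ)
    (Rb Pb : Fin m → (Fin m → ℝ))
    (f : Fin m → Finset (Rxn (Fin m)))
    (hf : ∀ i, f i = {(Rb i, Pi.single i 1 + Rb i), (Pi.single i 1 + Pb i, Pb i)})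
    (R : Finset (Rxn (Fin m))) (hR : R = Finset.univ.sup f) :
    (Pairwise fun i j => Disjoint (f i) (f j)) ∧
    IsDecomposition R f ∧ IsIndependent R f ∧
    (∀ i, stoichSubspace (f i) =
      Submodule.span ℝ {(Pi.single i 1 : Fin m → ℝ)}) ∧
    crnRank R = m ∧ crnRank R = ∑ i, crnRank (f i) := by
  replace hf : ∀ i, f i = embeddedPair (Pi.single i 1) (Rb i) (Pb i) := hf
  have hstoich i : stoichSubspace (f i) = Submodule.span ℝ {(Pi.single i 1 : Fin m → ℝ)} := by
    rw [hf, stoichSubspace_embeddedPair]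
  have hdisj : Pairwise fun i j => Disjoint (f i) (f j) := fun i j hij => by
    simpa only [hf] using disjoint_embeddedPair_single hij _ _ _ _
  have hrank_f i : crnRank (f i) = 1 := by
    rw [crnRank, hstoich, finrank_span_singleton (Pi.single_ne_zero_iff.mpr one_ne_zero)]
  subst hR
  have htop : stoichSubspace (Finset.univ.sup f) = ⊤ := by
    simpa [stoichSubspace_sup, hstoich] using iSup_span_single_eq_top
  have hrank_R : crnRank (Finset.univ.sup f) = m := by
    rw [crnRank, htop, finrank_top, Module.finrank_fin_fun]
  refine ⟨hdisj, isDecomposition_sup (fun i => hf i ▸ embeddedPair_nonempty _ _ _) hdisj,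
    isIndependent_sup ?_, hstoich, hrank_R, by simp [hrank_R, hrank_f]⟩
  simpa only [hstoich] using (Pi.linearIndependent_single_one (Fin m) ℝ).iSupIndep_span_singleton

/-- in the embedded representation of an S-system, the reaction pairs
R'_i = {R̲_i → X_i + R̲_i, X_i + P̲_i → P̲_i} are pairwise disjoint and form an independent
decomposition; each subnetwork has stoichiometric subspace span{X_i}, the rank is
s = m, and s = s_1 + ... + s_m. -/
theorem stmt_18 (m : ℕ) (hm : 0 < m) (Rset Pset : Fin m → Finset (Fin m))
    (Rb Pb : Fin m → (Fin m → ℝ))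
    (hRb : ∀ i, Rb i = ∑ j ∈ Rset i, Pi.single j (1 : ℝ))
    (hPb : ∀ i, Pb i = ∑ j ∈ Pset i, Pi.single j (1 : ℝ))
    (f : Fin m → Finset (Rxn (Fin m)))
    (hf : ∀ i, f i = {(Rb i, Pi.single i 1 + Rb i), (Pi.single i 1 + Pb i, Pb i)})
    (R : Finset (Rxn (Fin m))) (hR : R = Finset.univ.sup f) :
    (Pairwise fun i j => Disjoint (f i) (f j)) ∧
    IsDecomposition R f ∧ IsIndependent R f ∧
    (∀ i, stoichSubspace (f i) =
      Submodule.span ℝ {(Pi.single i 1 : Fin m → ℝ)}) ∧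
    crnRank R = m ∧ crnRank R = ∑ i, crnRank (f i) :=
  stmt_18_general m Rb Pb f hf R hR

end
end
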